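/- Given real n×n matrices M, C, K with M invertible, let A = [[0, −I_n], [M⁻¹K, M⁻¹C]] ∈ ℝ^{2n×2n} be the state-space matrix. Suppose ν_1,…,ν_{2n} ∈ ℂ, right eigenvectors x_k^{(r)} ∈ ℂ^{2n} with A x_k^{(r)} = ν_k x_k^{(r)}, and left (row) eigenvectors x_k^{(l)} with x_k^{(l)} A = ν_k x_k^{(l)} are given, satisfying the biorthonormality conditions x_k^{(l)} x_l^{(r)} = δ_{kl} for all k, l (so that Σ_k x_k^{(r)} x_k^{(l)} = I_{2n}). Write each right eigenvector in block form x_k^{(r)} = (v_k^{(r)}; w_k^{(r)}) with v_k^{(r)}, w_k^{(r)} ∈ ℂ^n, and each left eigenvector as x_k^{(l)} = (v_k^{(l)}, w_k^{(l)}). Then for every s ∈ ℂ with ν_k + s ≠ 0 for all k, the matrix K + sC + s²M is invertible and (K + sC + s²M)^{-1} = Σ_{k=1}^{2n} v_k^{(r)} w_k^{(l)} M^{-1} / (ν_k + s). -/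

import Mathlib

/-!
Since `A xₖ = νₖ xₖ` and `∑ₖ xₖ yₖ = 1`, the matrix `R = ∑ₖ (νₖ + s)⁻¹ xₖ yₖ` satisfies
`(A + s) R = 1`. Read blockwise, the first block row of this identity gives `R₂₂ = s R₁₂`, and
substituting this into the second gives `M⁻¹ (K + s C + s² M) R₁₂ = 1`. Hence `R₁₂ M⁻¹` is a right,
and therefore two-sided, inverse of `K + s C + s² M`.
-/

open Matrix Complex

namespace Matrix

variable {n : Type*} [Fintype n] [DecidableEq n]

noncomputable def stateSpaceMatrix {R : Type*} [CommRing R] (M C K : Matrix n n R) :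
    Matrix (n ⊕ n) (n ⊕ n) R :=
  fromBlocks 0 (-1) (M⁻¹ * K) (M⁻¹ * C)

theorem map_nonsing_inv {R S : Type*} [CommRing R] [CommRing S] (f : R →+* S)
    {M : Matrix n n R} (hM : IsUnit M) : M⁻¹.map f = (M.map f)⁻¹ := by
  refine (inv_eq_right_inv ?_).symm
  rw [← Matrix.map_mul, mul_nonsing_inv M ((isUnit_iff_isUnit_det M).mp hM)]
  simp

theorem stateSpaceMatrix_map {R S : Type*} [CommRing R] [CommRing S] (f : R →+* S)
    {M : Matrix n n R} (hM : IsUnit M) (C K : Matrix n n R) :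
    (stateSpaceMatrix M C K).map f = stateSpaceMatrix (M.map f) (C.map f) (K.map f) := by
  simp [stateSpaceMatrix, fromBlocks_map, Matrix.map_mul, map_nonsing_inv f hM,
    Matrix.map_neg f (map_neg f)]

theorem mul_sum_inv_smul_vecMulVec_eq_one {𝕜 ι : Type*} [Field 𝕜] [Fintype ι]
    (A : Matrix n n 𝕜) (ν : ι → 𝕜) (x y : ι → n → 𝕜) (hx : ∀ k, A *ᵥ x k = ν k • x k)
    (hxy : ∑ k, vecMulVec (x k) (y k) = 1) (s : 𝕜) (hs : ∀ k, ν k + s ≠ 0) :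
    (A + s • 1) * ∑ k, (ν k + s)⁻¹ • vecMulVec (x k) (y k) = 1 := by
  have hterm (k : ι) :
      (A + s • 1) * ((ν k + s)⁻¹ • vecMulVec (x k) (y k)) = vecMulVec (x k) (y k) := by
    rw [Matrix.mul_smul, mul_vecMulVec, add_mulVec, hx k, smul_mulVec, one_mulVec, ← add_smul,
      smul_vecMulVec, inv_smul_smul₀ (hs k)]
  simp only [Finset.mul_sum, hterm, hxy]

theorem toBlocks₁₂_sum_smul_vecMulVec {R ι l m : Type*} [CommRing R] [Fintype ι]
    (c : ι → R) (u v : ι → l ⊕ m → R) :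
    (∑ k, c k • vecMulVec (u k) (v k)).toBlocks₁₂ =
      ∑ k, c k • vecMulVec (fun i => u k (Sum.inl i)) (fun j => v k (Sum.inr j)) := by
  ext i j
  simp [toBlocks₁₂, sum_apply, vecMulVec_apply]

theorem quadratic_mul_toBlocks₁₂_mul_inv_eq_one {R : Type*} [CommRing R] {M C K : Matrix n n R}
    (hM : IsUnit M) (s : R) {B : Matrix (n ⊕ n) (n ⊕ n) R}
    (hB : (stateSpaceMatrix M C K + s • 1) * B = 1) :
    (K + s • C + s ^ 2 • M) * (B.toBlocks₁₂ * M⁻¹) = 1 := by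
  have hMM : M * M⁻¹ = 1 := mul_nonsing_inv M ((isUnit_iff_isUnit_det M).mp hM)
  have h12 := congrArg toBlocks₁₂ hB
  have h22 := congrArg toBlocks₂₂ hB
  rw [stateSpaceMatrix, ← fromBlocks_toBlocks B, ← fromBlocks_one] at h12 h22
  simp only [fromBlocks_smul, fromBlocks_add, fromBlocks_multiply, toBlocks_fromBlocks₁₂,
    toBlocks_fromBlocks₂₂, smul_zero, add_zero, zero_add] at h12 h22
  have hB₂₂ : B.toBlocks₂₂ = s • B.toBlocks₁₂ := by
    simpa [add_neg_eq_zero, eq_comm] using h12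
  have hB₁₂ : (K + s • C + s ^ 2 • M) * B.toBlocks₁₂ = M := by
    calc (K + s • C + s ^ 2 • M) * B.toBlocks₁₂
        = M * (M⁻¹ * K * B.toBlocks₁₂ + (M⁻¹ * C + s • 1) * (s • B.toBlocks₁₂)) := by
          simp only [Matrix.mul_add, Matrix.add_mul, ← Matrix.mul_assoc, hMM, Matrix.one_mul,
            Matrix.mul_smul, Matrix.smul_mul]
          module
      _ = M := by rw [← hB₂₂, h22, Matrix.mul_one]
  rw [← Matrix.mul_assoc, hB₁₂, hMM]

end Matrix

theorem dynamic_compliance_general_general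
    (n : ℕ) (M C K : Matrix (Fin n) (Fin n) ℝ) (hM : IsUnit M)
    (A : Matrix (Fin n ⊕ Fin n) (Fin n ⊕ Fin n) ℝ)
    (hA : A = Matrix.fromBlocks 0 (-1) (M⁻¹ * K) (M⁻¹ * C))
    (ν : Fin (2 * n) → ℂ)
    (xr xl : Fin (2 * n) → (Fin n ⊕ Fin n → ℂ))
    (hxr : ∀ k, (A.map Complex.ofReal).mulVec (xr k) = ν k • xr k)
    (hresol : ∑ k, Matrix.vecMulVec (xr k) (xl k) = (1 : Matrix (Fin n ⊕ Fin n) (Fin n ⊕ Fin n) ℂ))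
    (s : ℂ) (hs : ∀ k, ν k + s ≠ 0) :
    IsUnit (K.map Complex.ofReal + s • C.map Complex.ofReal + s ^ 2 • M.map Complex.ofReal) ∧
      (K.map Complex.ofReal + s • C.map Complex.ofReal + s ^ 2 • M.map Complex.ofReal)⁻¹ =
        ∑ k, (ν k + s)⁻¹ •
          (Matrix.vecMulVec (fun i => xr k (Sum.inl i)) (fun j => xl k (Sum.inr j)) *
            (M⁻¹).map Complex.ofReal) := by
  have hAℂ : A.map ofReal = stateSpaceMatrix (M.map ofReal) (C.map ofReal) (K.map ofReal) :=
    hA ▸ stateSpaceMatrix_map ofRealHom hM C K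
  have hresolvent := mul_sum_inv_smul_vecMulVec_eq_one _ ν xr xl hxr hresol s hs
  rw [hAℂ] at hresolvent
  have hMℂ : IsUnit (M.map ofReal) := hM.map ofRealHom.mapMatrix
  have hinv := quadratic_mul_toBlocks₁₂_mul_inv_eq_one hMℂ s hresolvent
  have hMinv : M⁻¹.map ofReal = (M.map ofReal)⁻¹ := map_nonsing_inv ofRealHom hM
  rw [toBlocks₁₂_sum_smul_vecMulVec, ← hMinv] at hinv
  refine ⟨isUnit_iff_exists_inv.2 ⟨_, hinv⟩, (inv_eq_right_inv hinv).trans ?_⟩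
  simp only [Finset.sum_mul, smul_mul_assoc]

/-- Dynamic compliance of a system of general structure: given the state-space matrix
`A = [[0, -I], [M⁻¹K, M⁻¹C]]`, a full biorthonormal set of right/left eigenpairs
`(ν k, x_r k, x_l k)`, and `s : ℂ` with `ν k + s ≠ 0` for all `k`, the matrix
`K + sC + s²M` is invertible with inverse `∑ k, v_r k ⬝ (w_l k) M⁻¹ / (ν k + s)`,
where `v_r k` is the upper block of `x_r k` and `w_l k` the lower block of `x_l k`. -/
theorem dynamic_compliance_general
    (n : ℕ) (M C K : Matrix (Fin n) (Fin n) ℝ) (hM : IsUnit M)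
    (A : Matrix (Fin n ⊕ Fin n) (Fin n ⊕ Fin n) ℝ)
    (hA : A = Matrix.fromBlocks 0 (-1) (M⁻¹ * K) (M⁻¹ * C))
    (ν : Fin (2 * n) → ℂ)
    (xr xl : Fin (2 * n) → (Fin n ⊕ Fin n → ℂ))
    (hxr : ∀ k, (A.map Complex.ofReal).mulVec (xr k) = ν k • xr k)
    (hxl : ∀ k, Matrix.vecMul (xl k) (A.map Complex.ofReal) = ν k • xl k)
    (hxr0 : ∀ k, xr k ≠ 0) (hxl0 : ∀ k, xl k ≠ 0)
    (hbiorth : ∀ k l, xl k ⬝ᵥ xr l = if k = l then (1 : ℂ) else 0)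
    (hresol : ∑ k, Matrix.vecMulVec (xr k) (xl k) = (1 : Matrix (Fin n ⊕ Fin n) (Fin n ⊕ Fin n) ℂ))
    (s : ℂ) (hs : ∀ k, ν k + s ≠ 0) :
    IsUnit (K.map Complex.ofReal + s • C.map Complex.ofReal + s ^ 2 • M.map Complex.ofReal) ∧
      (K.map Complex.ofReal + s • C.map Complex.ofReal + s ^ 2 • M.map Complex.ofReal)⁻¹ =
        ∑ k, (ν k + s)⁻¹ •
          (Matrix.vecMulVec (fun i => xr k (Sum.inl i)) (fun j => xl k (Sum.inr j)) *
            (M⁻¹).map Complex.ofReal) :=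
  dynamic_compliance_general_general n M C K hM A hA ν xr xl hxr hresol s hs
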